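/- arXiv:1604.07069 — 3 statements merged into one kernel-verified Lean document; each statement's English description precedes it below -/
import Mathlib

section
/- Let U ⊆ ℂ be open, let Ω ⊆ U × ℂ be a domain in ℂ², and let Ω̂ be compactly contained in Ω. Let f, g be holomorphic on U and let 0 < κ ≤ K be constants with κ < |f′(x)| and |f′(x)| < K, |g′(x)| < K for all x ∈ U. Then there exist ε₀ > 0, ϱ > 0 and c > 0, depending only on κ, K, Ω and Ω̂, such that the following holds for every ε ∈ (0, ε₀]. Suppose τ, χ : Ω → ℂ are holomorphic with sup_Ω |τ| ≤ ε and sup_Ω |χ| ≤ ε, and suppose the map F(x,y) = (f(x) + τ(x,y), g(x) + χ(x,y)) is a biholomorphism of Ω onto its image Δ = F(Ω). Then for every (x,y) ∈ Ω̂ and every tangent vector (u,v) ∈ ℂ² with |u| ≤ ϱ|v| and v ≠ 0, the vector (ũ, ṽ) = (DF(x,y))⁻¹ (u,v) satisfies |ũ| < ϱ|ṽ| (so the inverse differential preserves the ϱ-vertical cone field), and moreover max(|ũ|, |ṽ|) ≥ c·(κ/(K·ε))·|v| (so vectors in the vertical cone are expanded at rate at least c·κ/(K·ε)). -/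
open Complex Metric Set

/-!
Let `δ > 0` be such that the `δ`-neighbourhood of `closure Ω̂` lies in `Ω`. The Cauchy estimate on
`ball p δ` bounds the differentials of `τ` and `χ` at `p ∈ Ω̂` by `η = 2ε/δ`, so `DF(p)` is an
`η`-perturbation of the rank-one map `(ũ, ṽ) ↦ (f′ ũ, g′ ũ)`. If `DF(p)(ũ, ṽ) = (u, v)` with
`(u, v)` in the cone, the first row (where `|f′| > κ`) forces `|ũ| = O(η/κ)·|ṽ|`, and then the
second row gives `κ|v| ≤ 4Kη|ṽ|`; this is where `ε₀ ~ δκ²/K` is needed.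
-/

theorem norm_fderiv_le_of_norm_le_on_ball {E F : Type*} [NormedAddCommGroup E] [NormedSpace ℂ E]
    [NormedAddCommGroup F] [NormedSpace ℂ F] {f : E → F} {c : E} {r M : ℝ}
    (hd : DifferentiableOn ℂ f (ball c r)) (hM : ∀ z ∈ ball c r, ‖f z‖ ≤ M) (hr : 0 < r) :
    ‖fderiv ℂ f c‖ ≤ 2 * M / r := by
  refine Complex.norm_fderiv_le_div_of_mapsTo_ball hd (fun z hz ↦ ?_) hr
  rw [mem_closedBall, dist_eq_norm, two_mul]
  exact (norm_sub_le _ _).trans (add_le_add (hM z hz) (hM c (mem_ball_self hr)))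

theorem hasFDerivAt_comp_fst_add {f : ℂ → ℂ} {τ : ℂ × ℂ → ℂ} {p : ℂ × ℂ}
    (hf : DifferentiableAt ℂ f p.1) (hτ : DifferentiableAt ℂ τ p) :
    HasFDerivAt (fun q : ℂ × ℂ ↦ f q.1 + τ q)
      (deriv f p.1 • ContinuousLinearMap.fst ℂ ℂ ℂ + fderiv ℂ τ p) p :=
  (hf.hasDerivAt.comp_hasFDerivAt p hasFDerivAt_fst).add hτ.hasFDerivAt

theorem fderiv_perturbation_apply {f g : ℂ → ℂ} {τ χ : ℂ × ℂ → ℂ} {p : ℂ × ℂ}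
    (hf : DifferentiableAt ℂ f p.1) (hg : DifferentiableAt ℂ g p.1)
    (hτ : DifferentiableAt ℂ τ p) (hχ : DifferentiableAt ℂ χ p) (w : ℂ × ℂ) :
    fderiv ℂ (fun q : ℂ × ℂ ↦ (f q.1 + τ q, g q.1 + χ q)) p w =
      (deriv f p.1 * w.1 + fderiv ℂ τ p w, deriv g p.1 * w.1 + fderiv ℂ χ p w) := by
  rw [((hasFDerivAt_comp_fst_add hf hτ).prodMk (hasFDerivAt_comp_fst_add hg hχ)).fderiv]
  rfl

theorem vertical_cone_of_scalar_estimates {κ K η a b m n : ℝ} (hκ : 0 < κ) (hκK : κ ≤ K)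
    (hη : 0 ≤ η) (hηκ : 20 * K * η ≤ κ ^ 2) (ha : 0 ≤ a) (hb : 0 ≤ b) (hn : 0 < n)
    (hm : 4 * K * m ≤ κ * n) (hfst : κ * a ≤ m + η * (a + b)) (hsnd : n ≤ K * a + η * (a + b)) :
    4 * K * a < κ * b ∧ κ * n ≤ 4 * K * η * b := by
  have hK : 0 < K := hκ.trans_le hκK
  have hηκ' : 20 * η ≤ κ := by nlinarith
  have hab : 2 * κ * a ≤ 5 * η * b := by
    nlinarith [mul_le_mul_of_nonneg_left hsnd hκ.le, mul_nonneg hη ha, mul_nonneg hη hb]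
  have hbpos : 0 < b := by
    by_contra! hb0
    have : a ≤ 0 := by nlinarith
    nlinarith
  constructor
  · nlinarith [mul_le_mul_of_nonneg_left hab hK.le, mul_pos hκ hbpos]
  · nlinarith [mul_le_mul_of_nonneg_left hsnd hκ.le, mul_le_mul_of_nonneg_left hab hK.le,
      mul_le_mul_of_nonneg_left hab hη, mul_nonneg hη hb]

theorem vertical_cone_of_perturbed_differential {α β u v ut vt : ℂ} {A B : ℂ × ℂ →L[ℂ] ℂ}
    {κ K η : ℝ} (hκ : 0 < κ) (hκK : κ ≤ K) (hηκ : 20 * K * η ≤ κ ^ 2)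
    (hα : κ ≤ ‖α‖) (hβ : ‖β‖ ≤ K) (hA : ‖A‖ ≤ η) (hB : ‖B‖ ≤ η)
    (hu : α * ut + A (ut, vt) = u) (hv : β * ut + B (ut, vt) = v)
    (huv : ‖u‖ ≤ κ / (4 * K) * ‖v‖) (hv0 : v ≠ 0) :
    ‖ut‖ < κ / (4 * K) * ‖vt‖ ∧ κ * ‖v‖ ≤ 4 * K * η * ‖vt‖ := by
  have hK : 0 < K := hκ.trans_le hκK
  have hη : 0 ≤ η := (norm_nonneg A).trans hA
  have hw : ‖(ut, vt)‖ ≤ ‖ut‖ + ‖vt‖ := by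
    rw [Prod.norm_def]; exact max_le_add_of_nonneg (norm_nonneg _) (norm_nonneg _)
  have hAw : ‖A (ut, vt)‖ ≤ η * (‖ut‖ + ‖vt‖) :=
    (A.le_opNorm _).trans (mul_le_mul hA hw (norm_nonneg _) hη)
  have hBw : ‖B (ut, vt)‖ ≤ η * (‖ut‖ + ‖vt‖) :=
    (B.le_opNorm _).trans (mul_le_mul hB hw (norm_nonneg _) hη)
  have hfst : κ * ‖ut‖ ≤ ‖u‖ + η * (‖ut‖ + ‖vt‖) := calc
    κ * ‖ut‖ ≤ ‖α * ut‖ := by rw [norm_mul]; gcongr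
    _ = ‖u - A (ut, vt)‖ := by rw [← hu, add_sub_cancel_right]
    _ ≤ ‖u‖ + η * (‖ut‖ + ‖vt‖) := (norm_sub_le _ _).trans (by gcongr)
  have hsnd : ‖v‖ ≤ K * ‖ut‖ + η * (‖ut‖ + ‖vt‖) := calc
    ‖v‖ ≤ ‖β * ut‖ + ‖B (ut, vt)‖ := hv ▸ norm_add_le _ _
    _ ≤ K * ‖ut‖ + η * (‖ut‖ + ‖vt‖) := by rw [norm_mul]; gcongr
  have hm : 4 * K * ‖u‖ ≤ κ * ‖v‖ := by
    rw [div_mul_eq_mul_div, le_div_iff₀ (by positivity)] at huv; linarith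
  obtain ⟨hcone, hexp⟩ := vertical_cone_of_scalar_estimates hκ hκK hη hηκ (norm_nonneg ut)
    (norm_nonneg vt) (norm_pos_iff.2 hv0) hm hfst hsnd
  refine ⟨?_, hexp⟩
  rw [div_mul_eq_mul_div, lt_div_iff₀ (by positivity)]; linarith

theorem vertical_cone_field_invariance_general
    (U : Set ℂ) (hU : IsOpen U)
    (Ω : Set (ℂ × ℂ)) (hΩopen : IsOpen Ω)
    (hΩsub : Ω ⊆ U ×ˢ (Set.univ : Set ℂ))
    (Ωhat : Set (ℂ × ℂ)) (hsub : closure Ωhat ⊆ Ω) (hcpt : IsCompact (closure Ωhat))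
    (f g : ℂ → ℂ) (hf : DifferentiableOn ℂ f U) (hg : DifferentiableOn ℂ g U)
    (κ K : ℝ) (hκ : 0 < κ) (hκK : κ ≤ K)
    (hf' : ∀ x ∈ U, κ < ‖deriv f x‖ ∧ ‖deriv f x‖ < K)
    (hg' : ∀ x ∈ U, ‖deriv g x‖ < K) :
    ∃ ε₀ > (0 : ℝ), ∃ ϱ > (0 : ℝ), ∃ c > (0 : ℝ),
      ∀ ε : ℝ, 0 < ε → ε ≤ ε₀ →
        ∀ τ χ : ℂ × ℂ → ℂ,
          DifferentiableOn ℂ τ Ω → DifferentiableOn ℂ χ Ω →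
          (∀ p ∈ Ω, ‖τ p‖ ≤ ε) → (∀ p ∈ Ω, ‖χ p‖ ≤ ε) →
          ∀ F : ℂ × ℂ → ℂ × ℂ,
            F = (fun p : ℂ × ℂ => (f p.1 + τ p, g p.1 + χ p)) →
            Set.InjOn F Ω →
            (∃ Finv : ℂ × ℂ → ℂ × ℂ,
              DifferentiableOn ℂ Finv (F '' Ω) ∧ ∀ p ∈ Ω, Finv (F p) = p) →
            ∀ p ∈ Ωhat, ∀ u v : ℂ, ‖u‖ ≤ ϱ * ‖v‖ → v ≠ 0 →
              ∀ ut vt : ℂ, fderiv ℂ F p (ut, vt) = (u, v) →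
                ‖ut‖ < ϱ * ‖vt‖ ∧ c * (κ / (K * ε)) * ‖v‖ ≤ max ‖ut‖ ‖vt‖ := by
  have hK : 0 < K := hκ.trans_le hκK
  obtain ⟨δ, hδ, hδΩ⟩ := hcpt.exists_thickening_subset_open hΩopen hsub
  refine ⟨δ * κ ^ 2 / (40 * K), by positivity, κ / (4 * K), by positivity, δ / 8, by positivity,
    fun ε hε hεε₀ τ χ hτ hχ hτε hχε F hF _ _ p hp u v huv hv ut vt hDF ↦ ?_⟩
  subst hF
  have hball : ball p δ ⊆ Ω := fun z hz ↦ hδΩ (mem_thickening_iff.2 ⟨p, subset_closure hp, hz⟩)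
  have hpΩ : p ∈ Ω := hball (mem_ball_self hδ)
  have hx : p.1 ∈ U := (hΩsub hpΩ).1
  have hfx := hf.differentiableAt (hU.mem_nhds hx)
  have hgx := hg.differentiableAt (hU.mem_nhds hx)
  have hτp := hτ.differentiableAt (hΩopen.mem_nhds hpΩ)
  have hχp := hχ.differentiableAt (hΩopen.mem_nhds hpΩ)
  rw [fderiv_perturbation_apply hfx hgx hτp hχp, Prod.mk.injEq] at hDF
  have hη : 20 * K * (2 * ε / δ) ≤ κ ^ 2 := by
    rw [le_div_iff₀ (by positivity)] at hεε₀
    rw [mul_div_assoc', div_le_iff₀ hδ]; linarith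
  have hDτ := norm_fderiv_le_of_norm_le_on_ball (hτ.mono hball) (fun z hz ↦ hτε z (hball hz)) hδ
  have hDχ := norm_fderiv_le_of_norm_le_on_ball (hχ.mono hball) (fun z hz ↦ hχε z (hball hz)) hδ
  obtain ⟨hcone, hexp⟩ := vertical_cone_of_perturbed_differential hκ hκK hη (hf' p.1 hx).1.le
    (hg' p.1 hx).le hDτ hDχ hDF.1 hDF.2 huv hv
  refine ⟨hcone, ?_⟩
  calc δ / 8 * (κ / (K * ε)) * ‖v‖ = δ / (8 * K * ε) * (κ * ‖v‖) := by field_simp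
    _ ≤ δ / (8 * K * ε) * (4 * K * (2 * ε / δ) * ‖vt‖) := by gcongr
    _ = ‖vt‖ := by field_simp; ring
    _ ≤ max ‖ut‖ ‖vt‖ := le_max_right _ _

/-- **Vertical cone field invariance and expansion** (Proposition on 2D perturbations).
Let `U ⊆ ℂ` be open, `Ω ⊆ U × ℂ` a domain, `Ω̂ ⋐ Ω`, `f, g` holomorphic on `U` with
`κ < |f′| < K` and `|g′| < K` on `U` (`0 < κ ≤ K`). Then there are `ε₀, ϱ, c > 0`, depending
only on `κ, K, Ω, Ω̂`, such that for any `0 < ε ≤ ε₀` and any holomorphic `τ, χ` on `Ω` with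
`|τ|, |χ| ≤ ε`, if `F(x,y) = (f(x)+τ(x,y), g(x)+χ(x,y))` is a biholomorphism of `Ω` onto its
image, then at every point of `Ω̂` the inverse differential preserves the `ϱ`-vertical cone
and expands its vectors at rate at least `c·κ/(K·ε)`. -/
theorem vertical_cone_field_invariance
    (U : Set ℂ) (hU : IsOpen U)
    (Ω : Set (ℂ × ℂ)) (hΩopen : IsOpen Ω) (hΩconn : IsConnected Ω)
    (hΩsub : Ω ⊆ U ×ˢ (Set.univ : Set ℂ))
    (Ωhat : Set (ℂ × ℂ)) (hsub : closure Ωhat ⊆ Ω) (hcpt : IsCompact (closure Ωhat))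
    (f g : ℂ → ℂ) (hf : DifferentiableOn ℂ f U) (hg : DifferentiableOn ℂ g U)
    (κ K : ℝ) (hκ : 0 < κ) (hκK : κ ≤ K)
    (hf' : ∀ x ∈ U, κ < ‖deriv f x‖ ∧ ‖deriv f x‖ < K)
    (hg' : ∀ x ∈ U, ‖deriv g x‖ < K) :
    ∃ ε₀ > (0 : ℝ), ∃ ϱ > (0 : ℝ), ∃ c > (0 : ℝ),
      ∀ ε : ℝ, 0 < ε → ε ≤ ε₀ →
        ∀ τ χ : ℂ × ℂ → ℂ,
          DifferentiableOn ℂ τ Ω → DifferentiableOn ℂ χ Ω →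
          (∀ p ∈ Ω, ‖τ p‖ ≤ ε) → (∀ p ∈ Ω, ‖χ p‖ ≤ ε) →
          ∀ F : ℂ × ℂ → ℂ × ℂ,
            F = (fun p : ℂ × ℂ => (f p.1 + τ p, g p.1 + χ p)) →
            Set.InjOn F Ω →
            (∃ Finv : ℂ × ℂ → ℂ × ℂ,
              DifferentiableOn ℂ Finv (F '' Ω) ∧ ∀ p ∈ Ω, Finv (F p) = p) →
            ∀ p ∈ Ωhat, ∀ u v : ℂ, ‖u‖ ≤ ϱ * ‖v‖ → v ≠ 0 →
              ∀ ut vt : ℂ, fderiv ℂ F p (ut, vt) = (u, v) →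
                ‖ut‖ < ϱ * ‖vt‖ ∧ c * (κ / (K * ε)) * ‖v‖ ≤ max ‖ut‖ ‖vt‖ :=
  vertical_cone_field_invariance_general U hU Ω hΩopen hΩsub Ωhat hsub hcpt f g hf hg κ K hκ hκK hf'
    hg'
end

section
/- Let κ, K, ε, ϱ > 0 satisfy ϱK < κ ≤ K and ε(1+ϱ)² < ϱ(κ − ϱK). Let A, B, C, D ∈ ℂ with κ ≤ |A| ≤ K, |B| ≤ ε, |C| ≤ K, |D| ≤ ε, and let M be the 2×2 complex matrix [[A, B], [C, D]]. Then for every (u,v) ∈ ℂ² with |u| ≤ ϱ|v| and v ≠ 0, the vector (ũ, ṽ) = (Du − Bv, −Cu + Av) (the adjugate of M applied to (u,v)) satisfies: |ũ| ≤ ε(1+ϱ)|v|, |ṽ| ≥ (κ − ϱK)|v| > 0, and |ũ| < ϱ|ṽ|. Moreover |det M| = |AD − BC| ≤ 2Kε, so if det M ≠ 0 then the vector M⁻¹(u,v) = (ũ, ṽ)/det M has |π₂ M⁻¹(u,v)| ≥ ((κ − ϱK)/(2Kε))·|v| and lies in the open cone {(u',v') : |u'| < ϱ|v'|}. -/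
open Complex

/-- **Linear-algebra core of the cone-field proposition.** Let `κ, K, ε, ϱ > 0` with
`ϱK < κ ≤ K` and `ε(1+ϱ)² < ϱ(κ − ϱK)`, and let `M = [[A,B],[C,D]]` with `κ ≤ |A| ≤ K`,
`|B| ≤ ε`, `|C| ≤ K`, `|D| ≤ ε`. For `(u,v)` with `|u| ≤ ϱ|v|`, `v ≠ 0`, the adjugate image
`(ũ, ṽ) = (Du − Bv, −Cu + Av)` satisfies `|ũ| ≤ ε(1+ϱ)|v|`, `|ṽ| ≥ (κ − ϱK)|v| > 0` and
`|ũ| < ϱ|ṽ|`. Moreover `|det M| ≤ 2Kε`, so if `det M ≠ 0` the vector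
`M⁻¹(u,v) = (ũ,ṽ)/det M` has `|π₂ M⁻¹(u,v)| ≥ ((κ − ϱK)/(2Kε))|v|` and lies in the open
`ϱ`-vertical cone. -/
theorem cone_field_linear_algebra
    (κ K ε ϱ : ℝ) (hκ : 0 < κ) (hK : 0 < K) (hε : 0 < ε) (hϱ : 0 < ϱ)
    (h1 : ϱ * K < κ) (h2 : κ ≤ K) (h3 : ε * (1 + ϱ) ^ 2 < ϱ * (κ - ϱ * K))
    (A B C D : ℂ) (hA1 : κ ≤ ‖A‖) (hA2 : ‖A‖ ≤ K) (hB : ‖B‖ ≤ ε) (hC : ‖C‖ ≤ K)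
    (hD : ‖D‖ ≤ ε)
    (u v : ℂ) (hu : ‖u‖ ≤ ϱ * ‖v‖) (hv : v ≠ 0) :
    ‖D * u - B * v‖ ≤ ε * (1 + ϱ) * ‖v‖ ∧
      (κ - ϱ * K) * ‖v‖ ≤ ‖-C * u + A * v‖ ∧
      0 < ‖-C * u + A * v‖ ∧
      ‖D * u - B * v‖ < ϱ * ‖-C * u + A * v‖ ∧
      ‖A * D - B * C‖ ≤ 2 * K * ε ∧
      (A * D - B * C ≠ 0 →
        ((κ - ϱ * K) / (2 * K * ε)) * ‖v‖ ≤ ‖(-C * u + A * v) / (A * D - B * C)‖ ∧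
          ‖(D * u - B * v) / (A * D - B * C)‖ <
            ϱ * ‖(-C * u + A * v) / (A * D - B * C)‖) := by

  have hv' : 0 < ‖v‖ := norm_pos_iff.mpr hv
  have hgap : 0 < κ - ϱ * K := by linarith
  have hu1 : ‖D * u - B * v‖ ≤ ε * (1 + ϱ) * ‖v‖ := by
    calc ‖D * u - B * v‖ ≤ ‖D * u‖ + ‖B * v‖ := norm_sub_le _ _
      _ = ‖D‖ * ‖u‖ + ‖B‖ * ‖v‖ := by rw [norm_mul, norm_mul]
      _ ≤ ε * (ϱ * ‖v‖) + ε * ‖v‖ := by gcongr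
      _ = ε * (1 + ϱ) * ‖v‖ := by ring
  have hv1 : (κ - ϱ * K) * ‖v‖ ≤ ‖-C * u + A * v‖ := by
    have h := norm_sub_norm_le (A * v) (C * u)
    have hAv : ‖A * v‖ = ‖A‖ * ‖v‖ := norm_mul _ _
    have hCu : ‖C * u‖ ≤ K * (ϱ * ‖v‖) := by
      rw [norm_mul]; gcongr
    have heq : A * v - C * u = -C * u + A * v := by ring
    rw [heq] at h
    have : κ * ‖v‖ - K * (ϱ * ‖v‖) ≤ ‖-C * u + A * v‖ := by
      have hk : κ * ‖v‖ ≤ ‖A * v‖ := by rw [hAv]; gcongr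
      linarith
    linarith [this]
  have hv2 : 0 < ‖-C * u + A * v‖ := lt_of_lt_of_le (by positivity) hv1
  have hcone : ‖D * u - B * v‖ < ϱ * ‖-C * u + A * v‖ := by
    have h1p : (1:ℝ) ≤ 1 + ϱ := by linarith
    have : ε * (1 + ϱ) * ‖v‖ < ϱ * ((κ - ϱ * K) * ‖v‖) := by
      have : ε * (1 + ϱ) ≤ ε * (1 + ϱ)^2 := by nlinarith [mul_pos (mul_pos hε hϱ) (show (0:ℝ) < 1 + ϱ by linarith)]
      nlinarith
    have := lt_of_le_of_lt hu1 this
    calc ‖D * u - B * v‖ < ϱ * ((κ - ϱ * K) * ‖v‖) := this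
      _ ≤ ϱ * ‖-C * u + A * v‖ := by gcongr
  have hdet : ‖A * D - B * C‖ ≤ 2 * K * ε := by
    calc ‖A * D - B * C‖ ≤ ‖A * D‖ + ‖B * C‖ := norm_sub_le _ _
      _ = ‖A‖ * ‖D‖ + ‖B‖ * ‖C‖ := by rw [norm_mul, norm_mul]
      _ ≤ K * ε + ε * K := by gcongr
      _ = 2 * K * ε := by ring
  refine ⟨hu1, hv1, hv2, hcone, hdet, fun hne => ?_⟩
  have hdpos : 0 < ‖A * D - B * C‖ := norm_pos_iff.mpr hne
  constructor
  · rw [norm_div, div_mul_eq_mul_div, div_le_div_iff₀ (by positivity) hdpos]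
    calc (κ - ϱ * K) * ‖v‖ * ‖A * D - B * C‖ ≤ (κ - ϱ * K) * ‖v‖ * (2 * K * ε) := by gcongr
      _ = (κ - ϱ * K) * ‖v‖ * (2 * K * ε) := rfl
      _ ≤ ‖-C * u + A * v‖ * (2 * K * ε) := by gcongr
  · rw [norm_div, norm_div, ← mul_div_assoc]
    exact div_lt_div_of_pos_right hcone hdpos |>.trans_le le_rfl
end

section
/- Let θ ∈ (0,1) be irrational, let p_n/q_n (n ≥ 0) be the continued fraction convergents of θ, and set β_n = |q_nθ − p_n|. Let π : ℝ → ℝ/ℤ be the projection, and for each n define the arc I_n ⊆ ℝ/ℤ by I_n = π([0, β_n)) if n is even and I_n = π([−β_n, 0)) if n is odd. Then for every n ≥ 0, the q_{n+1} arcs π(iθ) + I_n for 0 ≤ i < q_{n+1}, together with the q_n arcs π(iθ) + I_{n+1} for 0 ≤ i < q_n, are pairwise disjoint, and their union is all of ℝ/ℤ. (This is the n-th dynamical partition of the circle for the rotation x ↦ x + θ: the collection covers the circle and any two distinct elements have disjoint interiors.) -/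
/-!
Write `e_n = q_n θ - p_n`. Then `e_{n+1} = -Gⁿ⁺¹(θ) e_n` for the Gauss map `G`, so
`e_n = (-1)ⁿ β_n` with `β_n > 0`, and the recursion for `q_n, p_n` gives
`β_n = a_{n+1} β_{n+1} + β_{n+2}`.

Disjointness: as `q_{n+1} p_n - p_{n+1} q_n = ±1`, every `(k, m) ∈ ℤ²` is
`a (q_n, p_n) + b (q_{n+1}, p_{n+1})`, and then `(-1)ⁿ (kθ - m) = a β_n - b β_{n+1}`. If the arcs
at `iθ` and `jθ` meet, `kθ - m` is a difference of two points of the arcs for `k = i - j`. For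
`0 < |k| < q_{n+1}` the integers `a ≠ 0` and `b` have opposite signs, so `|kθ - m| ≥ β_n`
(best approximation); for `-q_n < k < q_{n+1}` the sign of `a` forces `b`, and then
`(-1)ⁿ (kθ - m)` cannot lie in `(-(β_n + β_{n+1}), 0)`, where the differences of the two kinds of
arcs lie.

Covering, by induction on `n`: by the recursion for `β`, the arc `I_n` is the union of `I_{n+2}`
and the `a_{n+1}` arcs `π((q_n + t q_{n+1}) θ) + I_{n+1}`, `t < a_{n+1}`, because
`(q_n + t q_{n+1}) θ ≡ e_n + t e_{n+1} (mod 1)`.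
-/

open Set

/-- The Gauss map `x ↦ {1/x}`. -/
noncomputable def gaussMap : ℝ → ℝ := fun x => Int.fract (1 / x)

/-- The `(n+1)`-st partial quotient of `θ`: `a_{n+1} = ⌊1 / Gⁿ(θ)⌋`. -/
noncomputable def cfA (θ : ℝ) (n : ℕ) : ℕ := ⌊1 / (gaussMap^[n] θ)⌋₊

/-- `cfRec θ n = ((q_{n−1}, q_n), (p_{n−1}, p_n))`, the continued fraction convergents of `θ`
via the standard recursions `q_{n+1} = a_{n+1} q_n + q_{n−1}`, `p_{n+1} = a_{n+1} p_n + p_{n−1}`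
with initial conditions `q_{−1} = 0, q₀ = 1, p_{−1} = 1, p₀ = 0`. -/
noncomputable def cfRec (θ : ℝ) : ℕ → (ℕ × ℕ) × (ℕ × ℕ)
  | 0 => ((0, 1), (1, 0))
  | n + 1 =>
      (((cfRec θ n).1.2, cfA θ n * (cfRec θ n).1.2 + (cfRec θ n).1.1),
       ((cfRec θ n).2.2, cfA θ n * (cfRec θ n).2.2 + (cfRec θ n).2.1))

/-- The denominator `q_n` of the `n`-th continued fraction convergent of `θ`. -/
noncomputable def cfQ (θ : ℝ) (n : ℕ) : ℕ := ((cfRec θ n).1).2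

/-- The numerator `p_n` of the `n`-th continued fraction convergent of `θ`. -/
noncomputable def cfP (θ : ℝ) (n : ℕ) : ℕ := ((cfRec θ n).2).2

/-- `β_n = |q_n θ − p_n|`. -/
noncomputable def cfBeta (θ : ℝ) (n : ℕ) : ℝ := |(cfQ θ n : ℝ) * θ - (cfP θ n : ℝ)|

/-- The arc `I_n ⊆ ℝ/ℤ`: `π([0, β_n))` for `n` even, `π([−β_n, 0))` for `n` odd. -/
noncomputable def arcI (θ : ℝ) (n : ℕ) : Set (AddCircle (1 : ℝ)) :=
  if Even n then (fun x : ℝ => (x : AddCircle (1 : ℝ))) '' Set.Ico (0 : ℝ) (cfBeta θ n)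
  else (fun x : ℝ => (x : AddCircle (1 : ℝ))) '' Set.Ico (-(cfBeta θ n)) 0

/-- The translated arc `π(iθ) + I_n`. -/
noncomputable def arcTrans (θ : ℝ) (n i : ℕ) : Set (AddCircle (1 : ℝ)) :=
  (fun z => ((((i : ℝ) * θ : ℝ) : AddCircle (1 : ℝ)) + z)) '' arcI θ n

theorem exists_nat_lt_sub_mul_mem_Ico {γ lo s : ℝ} {a : ℕ} (hγ : 0 < γ)
    (hs : s ∈ Ico lo (lo + a * γ)) : ∃ t < a, s - t * γ ∈ Ico lo (lo + γ) := by
  obtain ⟨m, hm, -⟩ := existsUnique_sub_zsmul_mem_Ico hγ s lo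
  rw [zsmul_eq_mul] at hm
  have hm0 : ((-1 : ℤ) : ℝ) < m :=
    lt_of_mul_lt_mul_right (by push_cast; linarith [hm.2, hs.1]) hγ.le
  have hma : (m : ℝ) < (a : ℤ) := lt_of_mul_lt_mul_right (by push_cast; linarith [hm.1, hs.2]) hγ.le
  lift m to ℕ using by exact_mod_cast Int.cast_lt.1 hm0
  exact ⟨m, by exact_mod_cast hma, by exact_mod_cast hm⟩

theorem exists_nat_lt_add_mul_mem_Ico {γ hi s : ℝ} {a : ℕ} (hγ : 0 < γ)
    (hs : s ∈ Ico (hi - a * γ) hi) : ∃ t < a, s + t * γ ∈ Ico (hi - γ) hi := by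
  obtain ⟨m, hm, -⟩ := existsUnique_add_zsmul_mem_Ico hγ s (hi - γ)
  rw [zsmul_eq_mul, sub_add_cancel] at hm
  have hm0 : ((-1 : ℤ) : ℝ) < m :=
    lt_of_mul_lt_mul_right (by push_cast; linarith [hm.1, hs.2]) hγ.le
  have hma : (m : ℝ) < (a : ℤ) := lt_of_mul_lt_mul_right (by push_cast; linarith [hm.2, hs.1]) hγ.le
  lift m to ℕ using by exact_mod_cast Int.cast_lt.1 hm0
  exact ⟨m, by exact_mod_cast hma, by exact_mod_cast hm⟩

theorem le_abs_mul_sub_mul {q Q a b k : ℤ} {β γ : ℝ} (hq : 0 ≤ q) (hβ : 0 ≤ β) (hγ : 0 ≤ γ)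
    (hk : k = a * q + b * Q) (hk0 : k ≠ 0) (hkQ : |k| < Q) : β ≤ |a * β - b * γ| := by
  have hQ : 0 < Q := (abs_nonneg k).trans_lt hkQ
  have ha : a ≠ 0 := by
    rintro rfl
    rw [hk, zero_mul, zero_add, abs_mul, abs_of_pos hQ] at hkQ
    have hb : |b| < 1 := by nlinarith
    exact hk0 (by rw [hk, Int.abs_lt_one_iff.1 hb]; ring)
  wlog ha' : 0 < a generalizing a b k
  · have := this (a := -a) (b := -b) (k := -k) (by rw [hk]; ring) (neg_ne_zero.2 hk0)
      (by rwa [abs_neg]) (neg_ne_zero.2 ha) (by omega)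
    rwa [Int.cast_neg, Int.cast_neg, show -(a : ℝ) * β - -b * γ = -(a * β - b * γ) by ring,
      abs_neg] at this
  have hb : b ≤ 0 := by
    by_contra hb
    nlinarith [mul_nonneg ha'.le hq, mul_le_mul_of_nonneg_right (show 1 ≤ b by omega) hQ.le,
      (abs_lt.1 hkQ).2]
  have haR : (1 : ℝ) ≤ a := by exact_mod_cast ha'
  have hbR : (b : ℝ) ≤ 0 := by exact_mod_cast hb
  exact le_abs.2 (Or.inl (by nlinarith))

theorem le_neg_or_le_of_mul_sub_mul_mem_Ioo {q Q a b k : ℤ} {β γ : ℝ} (hq : 0 ≤ q) (hQ : 0 ≤ Q)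
    (hβ : 0 ≤ β) (hγ : 0 < γ) (hk : k = a * q + b * Q)
    (h : a * β - b * γ ∈ Ioo (-(β + γ)) 0) : k ≤ -q ∨ Q ≤ k := by
  rcases le_or_gt 0 a with ha | ha
  · have haR : (0 : ℝ) ≤ a := by exact_mod_cast ha
    have hbR : (0 : ℝ) < b := lt_of_mul_lt_mul_right (by nlinarith [h.2]) hγ.le
    have hb : 0 < b := by exact_mod_cast hbR
    right
    nlinarith
  · have haR : (a : ℝ) ≤ -1 := by exact_mod_cast (show a ≤ -1 by omega)
    have hbR : (b : ℝ) < 1 := lt_of_mul_lt_mul_right (by nlinarith [h.1]) hγ.le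
    have hb : b < 1 := by exact_mod_cast hbR
    left
    nlinarith

theorem AddCircle.coe_eq_coe_iff_exists_int {x y : ℝ} :
    (x : AddCircle (1 : ℝ)) = y ↔ ∃ m : ℤ, x - y = m := by
  rw [← sub_eq_zero, ← AddCircle.coe_sub, AddCircle.coe_eq_zero_iff]
  simp [eq_comm]

section GaussMap

variable {x : ℝ}

theorem Irrational.gaussMap (h : Irrational x) : Irrational (gaussMap x) := by
  rw [_root_.gaussMap, Int.fract, one_div]
  exact h.inv.sub_intCast _

theorem gaussMap_mem_Ioo (h : Irrational x) : gaussMap x ∈ Ioo 0 1 :=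
  ⟨Int.fract_pos.2 ((one_div x ▸ h.inv).ne_int _), Int.fract_lt_one _⟩

theorem natFloor_one_div_add_gaussMap (hx : 0 ≤ x) : (⌊1 / x⌋₊ : ℝ) + gaussMap x = 1 / x := by
  rw [natCast_floor_eq_intCast_floor (by positivity), gaussMap, Int.floor_add_fract]

theorem irrational_gaussMap_iterate (h : Irrational x) (n : ℕ) : Irrational (gaussMap^[n] x) := by
  induction n with
  | zero => exact h
  | succ n ih => rw [Function.iterate_succ_apply']; exact ih.gaussMap

end GaussMap

noncomputable def cfErr (θ : ℝ) (n : ℕ) : ℝ := cfQ θ n * θ - cfP θ n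

section Convergents

variable {θ : ℝ}

theorem cfQ_one : cfQ θ 1 = cfA θ 0 := by simp [cfQ, cfRec]

theorem cfQ_add_two (n : ℕ) : cfQ θ (n + 2) = cfA θ (n + 1) * cfQ θ (n + 1) + cfQ θ n := rfl

theorem cfP_add_two (n : ℕ) : cfP θ (n + 2) = cfA θ (n + 1) * cfP θ (n + 1) + cfP θ n := rfl

theorem cfErr_zero : cfErr θ 0 = θ := by simp [cfErr, cfQ, cfP, cfRec]

theorem cfErr_one : cfErr θ 1 = cfA θ 0 * θ - 1 := by simp [cfErr, cfQ, cfP, cfRec]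

theorem cfErr_add_two (n : ℕ) :
    cfErr θ (n + 2) = cfA θ (n + 1) * cfErr θ (n + 1) + cfErr θ n := by
  simp only [cfErr, cfQ_add_two, cfP_add_two]
  push_cast
  ring

theorem cfQ_succ_mul_cfP_sub_cfP_succ_mul_cfQ (n : ℕ) :
    (cfQ θ (n + 1) : ℤ) * cfP θ n - cfP θ (n + 1) * cfQ θ n = (-1) ^ (n + 1) := by
  induction n with
  | zero => simp [cfQ, cfP, cfRec]
  | succ n ih =>
    push_cast [cfQ_add_two, cfP_add_two]
    linear_combination -ih

theorem exists_eq_mul_cfQ_add_mul_cfQ_succ (n : ℕ) (k m : ℤ) : ∃ a b : ℤ,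
    k = a * cfQ θ n + b * cfQ θ (n + 1) ∧ m = a * cfP θ n + b * cfP θ (n + 1) := by
  have hdet := cfQ_succ_mul_cfP_sub_cfP_succ_mul_cfQ (θ := θ) n
  have hsq : ((-1 : ℤ) ^ n) ^ 2 = 1 := by rw [← pow_mul, pow_mul', neg_one_sq, one_pow]
  -- invert the matrix with columns `(q_n, p_n)`, `(q_{n+1}, p_{n+1})` and determinant `±1`
  refine ⟨(-1) ^ n * (cfP θ (n + 1) * k - cfQ θ (n + 1) * m),
    (-1) ^ n * (cfQ θ n * m - cfP θ n * k), ?_, ?_⟩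
  · linear_combination (-1) ^ n * k * hdet - k * hsq
  · linear_combination (-1) ^ n * m * hdet - m * hsq

end Convergents

section Irrational

variable {θ : ℝ} (hirr : Irrational θ) (h0 : 0 < θ) (h1 : θ < 1)
include hirr h0 h1

theorem gaussMap_iterate_mem_Ioo (n : ℕ) : gaussMap^[n] θ ∈ Ioo 0 1 := by
  cases n with
  | zero => exact ⟨h0, h1⟩
  | succ n =>
    rw [Function.iterate_succ_apply']
    exact gaussMap_mem_Ioo (irrational_gaussMap_iterate hirr n)

theorem one_le_cfA (n : ℕ) : 1 ≤ cfA θ n := by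
  obtain ⟨hpos, hlt⟩ := gaussMap_iterate_mem_Ioo hirr h0 h1 n
  exact Nat.one_le_floor_iff _ |>.2 (one_le_one_div hpos hlt.le)

theorem gaussMap_iterate_mul_cfA_add (n : ℕ) :
    gaussMap^[n] θ * (cfA θ n + gaussMap^[n + 1] θ) = 1 := by
  have hpos := (gaussMap_iterate_mem_Ioo hirr h0 h1 n).1
  rw [Function.iterate_succ_apply', cfA, natFloor_one_div_add_gaussMap hpos.le]
  field_simp

theorem cfErr_succ (n : ℕ) : cfErr θ (n + 1) = -gaussMap^[n + 1] θ * cfErr θ n := by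
  induction n with
  | zero =>
    have key := gaussMap_iterate_mul_cfA_add hirr h0 h1 0
    rw [Function.iterate_zero_apply] at key
    rw [cfErr_one, cfErr_zero]
    linear_combination key
  | succ n ih =>
    rw [cfErr_add_two]
    linear_combination (cfA θ (n + 1) + gaussMap^[n + 2] θ) * ih -
      cfErr θ n * gaussMap_iterate_mul_cfA_add hirr h0 h1 (n + 1)

theorem neg_one_pow_mul_cfErr_pos (n : ℕ) : 0 < (-1) ^ n * cfErr θ n := by
  induction n with
  | zero => simpa [cfErr_zero] using h0
  | succ n ih =>
    have hrec : (-1) ^ (n + 1) * cfErr θ (n + 1) = gaussMap^[n + 1] θ * ((-1) ^ n * cfErr θ n) := by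
      rw [cfErr_succ hirr h0 h1, pow_succ]
      ring
    exact hrec ▸ mul_pos (gaussMap_iterate_mem_Ioo hirr h0 h1 (n + 1)).1 ih

theorem cfBeta_eq_neg_one_pow_mul_cfErr (n : ℕ) : cfBeta θ n = (-1) ^ n * cfErr θ n := by
  rw [← abs_of_pos (neg_one_pow_mul_cfErr_pos hirr h0 h1 n), abs_mul, abs_neg_one_pow, one_mul]
  rfl

theorem cfBeta_pos (n : ℕ) : 0 < cfBeta θ n :=
  cfBeta_eq_neg_one_pow_mul_cfErr hirr h0 h1 n ▸ neg_one_pow_mul_cfErr_pos hirr h0 h1 n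

theorem cfBeta_eq_cfA_mul_add (n : ℕ) :
    cfBeta θ n = cfA θ (n + 1) * cfBeta θ (n + 1) + cfBeta θ (n + 2) := by
  simp only [cfBeta_eq_neg_one_pow_mul_cfErr hirr h0 h1, cfErr_add_two]
  ring

theorem cfBeta_succ_lt (n : ℕ) : cfBeta θ (n + 1) < cfBeta θ n := by
  have ha : (1 : ℝ) ≤ cfA θ (n + 1) := by exact_mod_cast one_le_cfA hirr h0 h1 (n + 1)
  nlinarith [cfBeta_eq_cfA_mul_add hirr h0 h1 n, cfBeta_pos hirr h0 h1 (n + 1),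
    cfBeta_pos hirr h0 h1 (n + 2)]

theorem cfQ_le_cfQ_succ (n : ℕ) : cfQ θ n ≤ cfQ θ (n + 1) := by
  cases n with
  | zero => rw [cfQ_one]; exact one_le_cfA hirr h0 h1 0
  | succ n =>
    rw [cfQ_add_two]
    nlinarith [one_le_cfA hirr h0 h1 (n + 1)]

theorem cfBeta_zero : cfBeta θ 0 = θ := by
  simp [cfBeta_eq_neg_one_pow_mul_cfErr hirr h0 h1, cfErr_zero]

theorem cfA_zero_mul_add_cfBeta_one : cfA θ 0 * θ + cfBeta θ 1 = 1 := by
  rw [cfBeta_eq_neg_one_pow_mul_cfErr hirr h0 h1, cfErr_one]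
  ring

theorem exists_neg_one_pow_mul_sub_eq (n : ℕ) (k m : ℤ) : ∃ a b : ℤ,
    k = a * cfQ θ n + b * cfQ θ (n + 1) ∧
      (-1) ^ n * (k * θ - m) = a * cfBeta θ n - b * cfBeta θ (n + 1) := by
  obtain ⟨a, b, hk, hm⟩ := exists_eq_mul_cfQ_add_mul_cfQ_succ (θ := θ) n k m
  refine ⟨a, b, hk, ?_⟩
  simp only [cfBeta_eq_neg_one_pow_mul_cfErr hirr h0 h1, cfErr, hk, hm]
  push_cast
  ring

end Irrational

noncomputable def arcInterval (θ : ℝ) (n : ℕ) : Set ℝ :=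
  if Even n then Ico 0 (cfBeta θ n) else Ico (-cfBeta θ n) 0

section Arcs

variable {θ : ℝ} {n : ℕ}

theorem mem_arcTrans_iff {i : ℕ} {z : AddCircle (1 : ℝ)} :
    z ∈ arcTrans θ n i ↔ ∃ s ∈ arcInterval θ n, ((i * θ + s : ℝ) : AddCircle (1 : ℝ)) = z := by
  have : arcI θ n = (↑) '' arcInterval θ n := by
    unfold arcI arcInterval
    split_ifs <;> rfl
  rw [arcTrans, this, image_image]
  simp only [mem_image, AddCircle.coe_add]

theorem abs_sub_lt_cfBeta {x y : ℝ} (hx : x ∈ arcInterval θ n) (hy : y ∈ arcInterval θ n) :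
    |x - y| < cfBeta θ n := by
  unfold arcInterval at hx hy
  split_ifs at hx hy <;>
    exact abs_sub_lt_iff.2 ⟨by linarith [hx.2, hy.1], by linarith [hx.1, hy.2]⟩

theorem neg_one_pow_mul_sub_mem_Ioo {x y : ℝ} (hx : x ∈ arcInterval θ n)
    (hy : y ∈ arcInterval θ (n + 1)) :
    (-1) ^ n * (y - x) ∈ Ioo (-(cfBeta θ n + cfBeta θ (n + 1))) 0 := by
  rcases Nat.even_or_odd n with hn | hn
  · simp only [arcInterval, hn, Nat.even_add_one, not_true_eq_false, if_true, if_false] at hx hy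
    rw [hn.neg_one_pow, one_mul]
    exact ⟨by linarith [hx.2, hy.1], by linarith [hx.1, hy.2]⟩
  · simp only [arcInterval, Nat.not_even_iff_odd.2 hn, Nat.even_add_one, not_false_eq_true,
      if_true, if_false] at hx hy
    rw [hn.neg_one_pow, neg_one_mul]
    exact ⟨by linarith [hx.1, hy.2], by linarith [hx.2, hy.1]⟩

theorem exists_int_of_not_disjoint_arcTrans {n' i j : ℕ}
    (h : ¬Disjoint (arcTrans θ n i) (arcTrans θ n' j)) :
    ∃ x ∈ arcInterval θ n, ∃ y ∈ arcInterval θ n', ∃ m : ℤ, ((i - j : ℤ) : ℝ) * θ - m = y - x := by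
  obtain ⟨z, hzi, hzj⟩ := not_disjoint_iff.1 h
  obtain ⟨x, hx, rfl⟩ := mem_arcTrans_iff.1 hzi
  obtain ⟨y, hy, hxy⟩ := mem_arcTrans_iff.1 hzj
  obtain ⟨m, hm⟩ := AddCircle.coe_eq_coe_iff_exists_int.1 hxy
  exact ⟨x, hx, y, hy, -m, by push_cast; linarith⟩

end Arcs

section Partition

variable {θ : ℝ} (hirr : Irrational θ) (h0 : 0 < θ) (h1 : θ < 1)
include hirr h0 h1

theorem cfBeta_le_abs_mul_sub {n : ℕ} {k : ℤ} (m : ℤ) (hk0 : k ≠ 0) (hk : |k| < cfQ θ (n + 1)) :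
    cfBeta θ n ≤ |k * θ - m| := by
  obtain ⟨a, b, hka, hab⟩ := exists_neg_one_pow_mul_sub_eq hirr h0 h1 n k m
  rw [← one_mul |_|, ← abs_neg_one_pow n, ← abs_mul, hab]
  exact le_abs_mul_sub_mul (Nat.cast_nonneg _) (cfBeta_pos hirr h0 h1 n).le
    (cfBeta_pos hirr h0 h1 (n + 1)).le hka hk0 hk

theorem disjoint_arcTrans {n l i j : ℕ} (hl : cfBeta θ l ≤ cfBeta θ n) (hi : i < cfQ θ (n + 1))
    (hj : j < cfQ θ (n + 1)) (hij : i ≠ j) : Disjoint (arcTrans θ l i) (arcTrans θ l j) := by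
  by_contra h
  obtain ⟨x, hx, y, hy, m, hxy⟩ := exists_int_of_not_disjoint_arcTrans h
  have hbest := cfBeta_le_abs_mul_sub hirr h0 h1 (n := n) (k := i - j) m (by omega)
    (abs_lt.2 ⟨by omega, by omega⟩)
  rw [hxy] at hbest
  linarith [abs_sub_lt_cfBeta hy hx]

theorem disjoint_arcTrans_arcTrans_succ {n i j : ℕ} (hi : i < cfQ θ (n + 1)) (hj : j < cfQ θ n) :
    Disjoint (arcTrans θ n i) (arcTrans θ (n + 1) j) := by
  by_contra h
  obtain ⟨x, hx, y, hy, m, hxy⟩ := exists_int_of_not_disjoint_arcTrans h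
  obtain ⟨a, b, hka, hab⟩ := exists_neg_one_pow_mul_sub_eq hirr h0 h1 n (i - j) m
  have hmem := neg_one_pow_mul_sub_mem_Ioo hx hy
  rw [← hxy, hab] at hmem
  have := le_neg_or_le_of_mul_sub_mul_mem_Ioo (Nat.cast_nonneg _) (Nat.cast_nonneg _)
    (cfBeta_pos hirr h0 h1 n).le (cfBeta_pos hirr h0 h1 (n + 1)) hka hmem
  omega

theorem mem_arcInterval_add_two_or_exists {n : ℕ} {s : ℝ} (hs : s ∈ arcInterval θ n) :
    s ∈ arcInterval θ (n + 2) ∨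
      ∃ t < cfA θ (n + 1), s - (cfErr θ n + t * cfErr θ (n + 1)) ∈ arcInterval θ (n + 1) := by
  have hrec := cfBeta_eq_cfA_mul_add hirr h0 h1 n
  have hγ := cfBeta_pos hirr h0 h1 (n + 1)
  have hβ := cfBeta_eq_neg_one_pow_mul_cfErr hirr h0 h1
  rcases Nat.even_or_odd n with hn | hn
  · have he : cfErr θ n = cfBeta θ n := by rw [hβ, hn.neg_one_pow, one_mul]
    have he' : cfErr θ (n + 1) = -cfBeta θ (n + 1) := by
      rw [hβ, hn.add_one.neg_one_pow, neg_one_mul, neg_neg]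
    rw [he, he']
    simp only [arcInterval, mul_neg, hn, Nat.even_add_one, not_true_eq_false, not_false_eq_true,
      if_true, if_false] at hs ⊢
    by_cases hsmall : s < cfBeta θ (n + 2)
    · exact Or.inl ⟨hs.1, hsmall⟩
    · obtain ⟨t, ht, hst⟩ := exists_nat_lt_add_mul_mem_Ico hγ (hi := cfBeta θ n)
        (a := cfA θ (n + 1)) ⟨by linarith, hs.2⟩
      exact Or.inr ⟨t, ht, by linarith [hst.1], by linarith [hst.2]⟩
  · have he : cfErr θ n = -cfBeta θ n := by rw [hβ, hn.neg_one_pow, neg_one_mul, neg_neg]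
    have he' : cfErr θ (n + 1) = cfBeta θ (n + 1) := by rw [hβ, hn.add_one.neg_one_pow, one_mul]
    rw [he, he']
    simp only [arcInterval, Nat.not_even_iff_odd.2 hn, Nat.even_add_one, not_true_eq_false,
      not_false_eq_true, if_true, if_false] at hs ⊢
    by_cases hsmall : -cfBeta θ (n + 2) ≤ s
    · exact Or.inl ⟨hsmall, hs.2⟩
    · obtain ⟨t, ht, hst⟩ := exists_nat_lt_sub_mul_mem_Ico hγ (lo := -cfBeta θ n)
        (a := cfA θ (n + 1)) ⟨hs.1, by linarith⟩
      exact Or.inr ⟨t, ht, by linarith [hst.1], by linarith [hst.2]⟩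

theorem arcTrans_subset {n i : ℕ} :
    arcTrans θ n i ⊆ arcTrans θ (n + 2) i ∪
      ⋃ t < cfA θ (n + 1), arcTrans θ (n + 1) (i + cfQ θ n + t * cfQ θ (n + 1)) := by
  intro z hz
  obtain ⟨s, hs, rfl⟩ := mem_arcTrans_iff.1 hz
  rcases mem_arcInterval_add_two_or_exists hirr h0 h1 hs with h | ⟨t, ht, h⟩
  · exact Or.inl (mem_arcTrans_iff.2 ⟨s, h, rfl⟩)
  · refine Or.inr (mem_iUnion₂.2 ⟨t, ht, mem_arcTrans_iff.2 ⟨_, h, ?_⟩⟩)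
    rw [AddCircle.coe_eq_coe_iff_exists_int]
    exact ⟨cfP θ n + t * cfP θ (n + 1), by push_cast [cfErr]; ring⟩

theorem exists_mem_arcTrans_zero_or_one (z : AddCircle (1 : ℝ)) :
    (∃ i < cfQ θ 1, z ∈ arcTrans θ 0 i) ∨ ∃ j < cfQ θ 0, z ∈ arcTrans θ 1 j := by
  obtain ⟨x, rfl⟩ := QuotientAddGroup.mk_surjective z
  rw [← AddCircle.coe_fract]
  have hβ1 := cfA_zero_mul_add_cfBeta_one hirr h0 h1
  by_cases hsmall : Int.fract x < cfA θ 0 * θ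
  · obtain ⟨t, ht, hst⟩ := exists_nat_lt_sub_mul_mem_Ico h0 (lo := 0)
      ⟨Int.fract_nonneg x, by rwa [zero_add]⟩
    refine Or.inl ⟨t, cfQ_one (θ := θ) ▸ ht,
      mem_arcTrans_iff.2 ⟨Int.fract x - t * θ, ?_, by rw [add_sub_cancel]⟩⟩
    simpa [arcInterval, cfBeta_zero hirr h0 h1] using hst
  · refine Or.inr ⟨0, Nat.one_pos, mem_arcTrans_iff.2 ⟨Int.fract x - 1, ?_, ?_⟩⟩
    · simp only [arcInterval, Nat.not_even_one, if_false]
      exact ⟨by linarith, by linarith [Int.fract_lt_one x]⟩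
    · rw [AddCircle.coe_eq_coe_iff_exists_int]
      exact ⟨-1, by push_cast; ring⟩

theorem iUnion_arcTrans_union_iUnion_arcTrans_eq_univ (n : ℕ) :
    (⋃ i ∈ Finset.range (cfQ θ (n + 1)), arcTrans θ n i) ∪
      (⋃ j ∈ Finset.range (cfQ θ n), arcTrans θ (n + 1) j) = univ := by
  refine eq_univ_of_forall fun z => ?_
  simp only [mem_union, mem_iUnion, Finset.mem_range, exists_prop]
  induction n with
  | zero => exact exists_mem_arcTrans_zero_or_one hirr h0 h1 z
  | succ n ih =>
    rcases ih with ⟨i, hi, hz⟩ | ⟨j, hj, hz⟩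
    · rcases arcTrans_subset hirr h0 h1 hz with h | h
      · exact Or.inr ⟨i, hi, h⟩
      · obtain ⟨t, ht, h⟩ := mem_iUnion₂.1 h
        refine Or.inl ⟨_, ?_, h⟩
        have := Nat.mul_le_mul_right (cfQ θ (n + 1)) ht
        rw [cfQ_add_two]
        nlinarith
    · exact Or.inl ⟨j, hj.trans_le (by rw [cfQ_add_two]; exact Nat.le_add_left _ _), hz⟩

end Partition

/-- **Dynamical partition of the circle.** For irrational `θ ∈ (0,1)` and every `n`, the
`q_{n+1}` arcs `π(iθ) + I_n` (`0 ≤ i < q_{n+1}`) together with the `q_n` arcs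
`π(iθ) + I_{n+1}` (`0 ≤ i < q_n`) are pairwise disjoint and their union is all of `ℝ/ℤ`. -/
theorem dynamical_partition_of_circle
    (θ : ℝ) (hirr : Irrational θ) (h0 : 0 < θ) (h1 : θ < 1) (n : ℕ) :
    (∀ i j : ℕ, i < cfQ θ (n + 1) → j < cfQ θ (n + 1) → i ≠ j →
        Disjoint (arcTrans θ n i) (arcTrans θ n j)) ∧
      (∀ i j : ℕ, i < cfQ θ n → j < cfQ θ n → i ≠ j →
        Disjoint (arcTrans θ (n + 1) i) (arcTrans θ (n + 1) j)) ∧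
      (∀ i j : ℕ, i < cfQ θ (n + 1) → j < cfQ θ n →
        Disjoint (arcTrans θ n i) (arcTrans θ (n + 1) j)) ∧
      ((⋃ i ∈ Finset.range (cfQ θ (n + 1)), arcTrans θ n i) ∪
          (⋃ j ∈ Finset.range (cfQ θ n), arcTrans θ (n + 1) j) = Set.univ) := by
  have hq := cfQ_le_cfQ_succ hirr h0 h1 n
  refine ⟨fun i j hi hj hij => disjoint_arcTrans hirr h0 h1 le_rfl hi hj hij,
    fun i j hi hj hij => ?_,
    fun i j hi hj => disjoint_arcTrans_arcTrans_succ hirr h0 h1 hi hj,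
    iUnion_arcTrans_union_iUnion_arcTrans_eq_univ hirr h0 h1 n⟩
  exact disjoint_arcTrans hirr h0 h1 (cfBeta_succ_lt hirr h0 h1 n).le (hi.trans_le hq)
    (hj.trans_le hq) hij
end
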